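/- Let π be an involution of length n avoiding the pattern 132 whose right-to-left maxima, listed in increasing order of value, are m_1 < m_2 < ⋯ < m_s. Then the value m_i occurs at position m_{s+1−i}, i.e. π(m_{s+1−i}) = m_i, for all 1 ≤ i ≤ s; moreover, if s is even then π has no fixed point. -/
import Mathlib


open Finset

/-- The number of occurrences of the pattern `τ` (of length `k`) in the
permutation `π` (of length `n`): the number of strictly increasing index
sequences along which `π` is order-isomorphic to `τ`. -/
def occ {k n : ℕ} (τ : Equiv.Perm (Fin k)) (π : Equiv.Perm (Fin n)) : ℕ :=
  (Finset.univ.filter (fun f : Fin k → Fin n =>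
    (∀ a b : Fin k, a < b → f a < f b) ∧
    (∀ a b : Fin k, τ a < τ b ↔ π (f a) < π (f b)))).card

/-- The number of inversions of a permutation: pairs `i < j` with `π i > π j`. -/
def inversions {n : ℕ} (π : Equiv.Perm (Fin n)) : ℕ :=
  (Finset.univ.filter (fun p : Fin n × Fin n => p.1 < p.2 ∧ π p.2 < π p.1)).card

/-- The number of fixed points of a permutation. -/
def fixedPointCount {n : ℕ} (π : Equiv.Perm (Fin n)) : ℕ :=
  (Finset.univ.filter (fun j : Fin n => π j = j)).card

/-- The pattern `132` as a permutation of `Fin 3` (zero-indexed values `0,2,1`). -/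
def p132 : Equiv.Perm (Fin 3) := Equiv.swap 1 2

lemma no132 {n : ℕ} (π : Equiv.Perm (Fin n)) (havoid : occ p132 π = 0)
    {a b c : Fin n} (hab : a < b) (hbc : b < c)
    (h1 : π a < π c) (h2 : π c < π b) : False := by
  have h3 : π a < π b := h1.trans h2
  rw [occ, Finset.card_eq_zero, Finset.eq_empty_iff_forall_notMem] at havoid
  apply havoid (fun x : Fin 3 => if x = 0 then a else if x = 1 then b else c)
  simp only [Finset.mem_filter, Finset.mem_univ, true_and]
  refine ⟨fun x y hxy => ?_, fun x y => ?_⟩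
  · fin_cases x <;> fin_cases y <;> simp_all <;>
      first
        | exact hab | exact hbc | exact hab.trans hbc
  · have e0 : p132 0 = 0 := by decide
    have e1 : p132 1 = 2 := by decide
    have e2 : p132 2 = 1 := by decide
    fin_cases x <;> fin_cases y <;>
      simp [e0, e1, e2] <;>
      first | exact h1 | exact h2 | exact h3 | exact h1.le | exact h2.le | exact h3.le


/-- Let π be a 132-avoiding involution whose right-to-left maxima, listed in
increasing order of value, are m 0 < m 1 < ⋯ < m (s-1) (zero-indexed). Then
π (m (s-1-i)) = m i for all i, and if s is even then π has no fixed point. -/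
theorem rlmax_structure (n s : ℕ) (π : Equiv.Perm (Fin n))
    (hinv : ∀ i, π (π i) = i) (havoid : occ p132 π = 0)
    (V : Finset (Fin n))
    (hV : V = (Finset.univ.filter (fun j : Fin n => ∀ i : Fin n, j < i → π i < π j)).image π)
    (hs : V.card = s) (m : Fin s → Fin n)
    (hm : ∀ i : Fin s, m i = (V.orderIsoOfFin hs i : Fin n)) :
    (∀ i : Fin s, π (m i.rev) = m i) ∧ (Even s → ∀ j : Fin n, π j ≠ j) := by
  -- `P j` ("j is a right-to-left maximum position") is preserved by π
  have hP : ∀ j : Fin n, (∀ i, j < i → π i < π j) → (∀ i, π j < i → π i < π (π j)) := by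
    intro j hj i hi
    rw [hinv]
    rcases lt_trichotomy (π i) j with h | h | h
    · exact h
    · exfalso
      have : i = π j := by rw [← h, hinv]
      exact absurd this (ne_of_gt hi)
    · exfalso
      have h2 := hj (π i) h
      rw [hinv] at h2
      exact absurd hi (not_lt.mpr h2.le)
  have hVmem : ∀ j : Fin n, j ∈ V ↔ (∀ i, j < i → π i < π j) := by
    intro j
    rw [hV]
    simp only [Finset.mem_image, Finset.mem_filter, Finset.mem_univ, true_and]
    constructor
    · rintro ⟨r, hr, rfl⟩
      exact hP r hr
    · intro hj
      exact ⟨π j, hP j hj, hinv j⟩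
  have hπV : ∀ j, j ∈ V → π j ∈ V := fun j hj =>
    (hVmem (π j)).mpr (hP j ((hVmem j).mp hj))
  have hanti : ∀ j j' : Fin n, j ∈ V → j < j' → π j' < π j := fun j j' hj h =>
    (hVmem j).mp hj j' h
  set e := V.orderIsoOfFin hs with he
  have hmV : ∀ i : Fin s, m i ∈ V := by
    intro i; rw [hm]; exact (e i).2
  have hmmono : ∀ i j : Fin s, i < j → m i < m j := by
    intro i j hij
    rw [hm, hm]
    exact e.strictMono hij
  have hminj : Function.Injective m := by
    intro i j hij
    rcases lt_trichotomy i j with h | h | h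
    · exact absurd hij (ne_of_lt (hmmono _ _ h))
    · exact h
    · exact absurd hij.symm (ne_of_lt (hmmono _ _ h))
  -- Part 1
  have part1 : ∀ i : Fin s, π (m i.rev) = m i := by
    have hg : StrictMono (fun i : Fin s => e.symm ⟨π (m i.rev), hπV _ (hmV i.rev)⟩) := by
      intro i j hij
      apply e.symm.strictMono
      rw [Subtype.mk_lt_mk]
      exact hanti _ _ (hmV j.rev) (hmmono _ _ (Fin.rev_lt_rev.mpr hij))
    have hsurj : Function.Surjective (fun i : Fin s => e.symm ⟨π (m i.rev), hπV _ (hmV i.rev)⟩) :=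
      Finite.injective_iff_surjective.mp hg.injective
    have hid : (fun i : Fin s => e.symm ⟨π (m i.rev), hπV _ (hmV i.rev)⟩) = (id : Fin s → Fin s) := by
      haveI : WellFoundedLT (Fin s) := inferInstance
      apply (StrictMono.range_inj hg (strictMono_id (α := Fin s))).mp
      rw [Set.range_id, Set.range_eq_univ]
      exact hsurj
    intro i
    have h1 : e.symm ⟨π (m i.rev), hπV _ (hmV i.rev)⟩ = i := congrFun hid i
    have h2 := congrArg e h1
    rw [OrderIso.apply_symm_apply] at h2
    have h3 := congrArg Subtype.val h2
    rw [hm i]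
    exact h3
  refine ⟨part1, ?_⟩
  -- Part 2
  intro heven j hj
  have hFne : j ∈ Finset.univ.filter (fun x : Fin n => π x = x) := by
    simp [hj]
  set F := Finset.univ.filter (fun x : Fin n => π x = x) with hF
  have hne : F.Nonempty := ⟨j, hFne⟩
  set f := F.max' hne with hfdef
  have hf : π f = f := (Finset.mem_filter.mp (F.max'_mem hne)).2
  have hmax : ∀ x : Fin n, π x = x → x ≤ f := by
    intro x hx
    exact F.le_max' x (by simp [hF, hx])
  -- f is a right-to-left maximum
  have hfV : f ∈ V := by
    rw [hVmem]
    intro i hi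
    rw [hf]
    rcases lt_trichotomy (π i) f with h | h | h
    · exact h
    · exfalso
      have : i = f := by rw [← hf, ← h, hinv]
      exact absurd this (ne_of_gt hi)
    · exfalso
      have hnfix : π i ≠ i := by
        intro hx
        exact absurd hi (not_lt.mpr (hmax i hx))
      rcases lt_or_gt_of_ne hnfix with hlt | hgt
      · -- π i < i : take b = π i, c = i
        refine no132 π havoid (a := f) (b := π i) (c := i) h hlt ?_ ?_
        · rw [hf]; exact h
        · rw [hinv]; exact hlt
      · -- i < π i : take b = i, c = π i
        refine no132 π havoid (a := f) (b := i) (c := π i) hi hgt ?_ ?_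
        · rw [hf, hinv]; exact hi
        · rw [hinv]; exact hgt
  -- f = m i0 with i0.rev = i0, so s is odd
  set i0 := e.symm ⟨f, hfV⟩ with hi0
  have hmi0 : m i0 = f := by
    rw [hm, hi0, OrderIso.apply_symm_apply]
  have hrev : m i0.rev = m i0 := by
    apply π.injective
    rw [part1 i0, hmi0, hf]
  have := hminj hrev
  have hval : (i0.rev : ℕ) = (i0 : ℕ) := by rw [this]
  rw [Fin.val_rev] at hval
  have hlt := i0.isLt
  rw [Nat.even_iff] at heven
  omega
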